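/- Let α, β, H, α̲ be as follows: α : ℕ → ℕ unbounded and nondecreasing; β(n) = max{m : α(m) ≤ n} (0 if empty); H strictly increasing with β(m) < H(m) for all m; α̲(n) = max{m : H(m) ≤ n} (0 if empty). Then for every n with {m : H(m) ≤ n} nonempty, β(α̲(n)) < n and therefore α̲(n) < α(n). -/
import Mathlib

theorem stmt_11 (α H : ℕ → ℕ)
    (hub : ∀ B : ℕ, ∃ n : ℕ, B < α n)
    (hmono : Monotone α)
    (hβH : ∀ m : ℕ, sSup {k : ℕ | α k ≤ m} < H m)
    (hHmono : ∀ m : ℕ, H m < H (m + 1)) :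
    ∀ n : ℕ, {m : ℕ | H m ≤ n}.Nonempty →
      sSup {k : ℕ | α k ≤ sSup {m : ℕ | H m ≤ n}} < n ∧
      sSup {m : ℕ | H m ≤ n} < α n := by
  intro n hne
  have hHsm : StrictMono H := strictMono_nat_of_lt_succ hHmono
  have hbdd : BddAbove {m : ℕ | H m ≤ n} := by
    refine ⟨n, fun m hm => le_trans (hHsm.le_apply) hm⟩
  set a := sSup {m : ℕ | H m ≤ n} with ha
  have hamem : a ∈ {m : ℕ | H m ≤ n} := Nat.sSup_mem hne hbdd
  have h1 : sSup {k : ℕ | α k ≤ a} < n := lt_of_lt_of_le (hβH a) hamem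
  refine ⟨h1, ?_⟩
  by_contra hc
  push_neg at hc
  -- α n ≤ a, so n ∈ {k | α k ≤ a}; set bounded, so n ≤ sSup, contradiction
  obtain ⟨N, hN⟩ := hub a
  have hbdd2 : BddAbove {k : ℕ | α k ≤ a} := by
    refine ⟨N, fun k hk => ?_⟩
    by_contra hkN
    push_neg at hkN
    exact absurd (le_trans (hmono hkN.le) hk) (not_le.mpr hN)
  have : n ≤ sSup {k : ℕ | α k ≤ a} := le_csSup hbdd2 hc
  omega
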